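/- Let A be an anti-commutative CB-algebra over a field F of characteristic different from 2. Then A⁴ = 0; in particular ((x·y)·z)·w = 0 and x·(y·(z·w)) = 0 for all x, y, z, w ∈ A. -/

import Mathlib

/-!
Anti-commutativity and the CB property give `x·(x·z) = 0` and then `(x·t)·(x·z) = 0`;
linearizing in `x` makes `(x·y)·(z·w)` change sign under the cyclic substitution
`(x, y, w) ↦ (y, w, x)`.
Applying that cycle three times gives `(x·y)·(z·w) = -(x·y)·(z·w)`, so these products
vanish when `2` is not a zero divisor on the algebra, and every product of four elements
reduces to one of them.
-/

/-- The descending series of ideals: `algPow mul k` is `A^{k+1}`, so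
`algPow mul 0 = A`, `algPow mul 1 = A² = span {x·y}` and
`algPow mul (k) = A^{k} · A` for `k ≥ 1`. -/
def algPow {F A : Type*} [Field F] [AddCommGroup A] [Module F A]
    (mul : A →ₗ[F] A →ₗ[F] A) : ℕ → Submodule F A
  | 0 => ⊤
  | k + 1 => Submodule.span F {w : A | ∃ u ∈ algPow mul k, ∃ a : A, w = mul u a}

namespace CBAlgebra

section CommRing

variable {R A : Type*} [CommRing R] [AddCommGroup A] [Module R A] {mul : A →ₗ[R] A →ₗ[R] A}

variable (mul) in
def IsCB : Prop :=
  ∀ x y : A, mul x y = 0 → ∀ z : A, mul (mul x z) y = 0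

theorem mul_mul_self_left (hac : mul.IsAlt) (hcb : IsCB mul) (x z : A) :
    mul x (mul x z) = 0 := by
  rw [← hac.neg, hcb x x (hac x) z, neg_zero]

theorem mul_mul_left_anticomm (hac : mul.IsAlt) (hcb : IsCB mul) (a b c : A) :
    mul a (mul b c) = -mul b (mul a c) :=
  ((show (mul.compl₂ (mul.flip c)).IsAlt from
    fun x => mul_mul_self_left hac hcb x c).neg b a).symm

theorem mul_mul_mul_anticomm (hac : mul.IsAlt) (hcb : IsCB mul) (x y t z : A) :
    mul (mul x t) (mul y z) = -mul (mul y t) (mul x z) :=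
  ((show (mul.compl₁₂ (mul.flip t) (mul.flip z)).IsAlt from
    fun x => hcb x _ (mul_mul_self_left hac hcb x z) t).neg y x).symm

theorem mul_mul_mul_cycle (hac : mul.IsAlt) (hcb : IsCB mul) (x y z w : A) :
    mul (mul x y) (mul z w) = -mul (mul y w) (mul z x) := by
  rw [← hac.neg y x, map_neg, LinearMap.neg_apply, mul_mul_mul_anticomm hac hcb y z x w,
    ← hac.neg (mul z x), neg_neg]

theorem mul_mul_mul_eq_zero (h2 : IsSMulRegular A (2 : R)) (hac : mul.IsAlt)
    (hcb : IsCB mul) (x y z w : A) :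
    mul (mul x y) (mul z w) = 0 := by
  have h_neg : mul (mul x y) (mul z w) = -mul (mul x y) (mul z w) := by
    conv_lhs => rw [mul_mul_mul_cycle hac hcb x y z w, mul_mul_mul_cycle hac hcb y w z x,
      mul_mul_mul_cycle hac hcb w x z y, neg_neg]
  refine h2 (?_ : (2 : R) • mul (mul x y) (mul z w) = (2 : R) • (0 : A))
  rw [smul_zero, two_smul]
  nth_rewrite 2 [h_neg]
  exact add_neg_cancel _

theorem mul_mul_mul_left_eq_zero (h2 : IsSMulRegular A (2 : R)) (hac : mul.IsAlt)
    (hcb : IsCB mul) (x y z w : A) :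
    mul (mul (mul x y) z) w = 0 := by
  rw [← hac.neg, mul_mul_left_anticomm hac hcb, mul_mul_mul_eq_zero h2 hac hcb, neg_zero,
    neg_zero]

theorem mul_mul_mul_right_eq_zero (h2 : IsSMulRegular A (2 : R)) (hac : mul.IsAlt)
    (hcb : IsCB mul) (x y z w : A) :
    mul x (mul y (mul z w)) = 0 := by
  rw [← hac.neg, ← hac.neg (mul z w), map_neg, LinearMap.neg_apply,
    mul_mul_mul_left_eq_zero h2 hac hcb, neg_zero, neg_zero]

end CommRing

section Field

variable {F A : Type*} [Field F] [AddCommGroup A] [Module F A] {mul : A →ₗ[F] A →ₗ[F] A}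

theorem algPow_succ_le {k : ℕ} {p : Submodule F A}
    (h : ∀ u ∈ algPow mul k, ∀ a, mul u a ∈ p) :
    algPow mul (k + 1) ≤ p :=
  Submodule.span_le.mpr fun _ ⟨u, hu, a, hw⟩ => hw ▸ h u hu a

theorem algPow_three_eq_bot (h : ∀ x y z w : A, mul (mul (mul x y) z) w = 0) :
    algPow mul 3 = ⊥ := by
  have hle1 : algPow mul 1 ≤ LinearMap.ker (mul.compr₂ mul) :=
    algPow_succ_le fun u _ c => LinearMap.ext₂ fun b a => h u c b a
  have hle2 : algPow mul 2 ≤ LinearMap.ker mul :=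
    algPow_succ_le fun v hv b => LinearMap.ext fun a => LinearMap.congr_fun₂ (hle1 hv) b a
  exact eq_bot_iff.mpr <| algPow_succ_le fun u hu a => by
    rw [Submodule.mem_bot, hle2 hu, LinearMap.zero_apply]

end Field

end CBAlgebra

theorem stmt_9 (F : Type*) [Field F] (h2 : (2 : F) ≠ 0)
    (A : Type*) [AddCommGroup A] [Module F A]
    (mul : A →ₗ[F] A →ₗ[F] A)
    (hac : ∀ x : A, mul x x = 0)
    (hcb : ∀ x y : A, mul x y = 0 → ∀ z : A, mul (mul x z) y = 0) :
    algPow mul 3 = ⊥ ∧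
      (∀ x y z w : A, mul (mul (mul x y) z) w = 0) ∧
      (∀ x y z w : A, mul x (mul y (mul z w)) = 0) := by
  have h2' : IsSMulRegular A (2 : F) := IsSMulRegular.of_ne_zero h2
  have hleft := CBAlgebra.mul_mul_mul_left_eq_zero h2' hac hcb
  exact ⟨CBAlgebra.algPow_three_eq_bot hleft, hleft,
    CBAlgebra.mul_mul_mul_right_eq_zero h2' hac hcb⟩
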